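/- The remainder of a filled asynchronous context is computed componentwise: rem(A[T_n]^{n∈N}, τ) equals A'[T_n]^{n∈N'} if rem(A[]^{n∈N}, τ) = A'[]^{n∈N'} (the queue is consumed within the context), and equals rem(T_{n0}, τ0) if consuming τ through A reaches hole n0 with residual queue τ0. -/

import Mathlib

/-- Session types with de Bruijn indices for recursion variables.
`branch`/`select` carry lists of (label, carried type, continuation). -/
inductive SessionType : Type where
  | done : SessionType
  | var : Nat → SessionType
  | mu : SessionType → SessionType
  | branch : List (Nat × SessionType × SessionType) → SessionType
  | select : List (Nat × SessionType × SessionType) → SessionType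

abbrev SEntry := Nat × SessionType × SessionType

namespace SessionType

mutual
def subst (x : Nat) (U : SessionType) : SessionType → SessionType
  | .done => .done
  | .var n => if n = x then U else .var n
  | .mu T => .mu (subst (x+1) U T)
  | .branch bs => .branch (substList x U bs)
  | .select bs => .select (substList x U bs)
def substList (x : Nat) (U : SessionType) : List SEntry → List SEntry
  | [] => []
  | (l, s, t) :: rest => (l, subst x U s, subst x U t) :: substList x U rest
end

mutual
def dual : SessionType → SessionType
  | .done => .done
  | .var n => .var n
  | .mu T => .mu (dual T)
  | .branch bs => .select (dualList bs)
  | .select bs => .branch (dualList bs)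
def dualList : List SEntry → List SEntry
  | [] => []
  | (l, s, t) :: rest => (l, s, dual t) :: dualList rest
end

mutual
def fvBelow (k : Nat) : SessionType → Bool
  | .done => true
  | .var n => decide (n < k)
  | .mu T => fvBelow (k+1) T
  | .branch bs => fvBelowList k bs
  | .select bs => fvBelowList k bs
def fvBelowList (k : Nat) : List SEntry → Bool
  | [] => true
  | (_, s, t) :: rest => fvBelow k s && fvBelow k t && fvBelowList k rest
end

/-- Closed session types (no free recursion variables). -/
def ClosedTy (T : SessionType) : Prop := fvBelow 0 T = true

end SessionType

open SessionType

/-- The equi-recursive unfolding of `μt.T` (body `T`): `T[μt.T/t]`. -/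
def unfoldMu (T : SessionType) : SessionType := subst 0 (.mu T) T

/-- One step of the coinductive synchronous subtyping rules (sub-end, sub-bra, sub-sel),
with the equi-recursive identification of a μ-type with its unfolding. -/
def SubSF (R : SessionType → SessionType → Prop) (T S : SessionType) : Prop :=
  (T = .done ∧ S = .done) ∨
  (∃ bs bs', T = .branch bs ∧ S = .branch bs' ∧
    ∀ e' ∈ bs', ∃ e ∈ bs, e.1 = e'.1 ∧ R e.2.1 e'.2.1 ∧ R e.2.2 e'.2.2) ∨
  (∃ bs bs', T = .select bs ∧ S = .select bs' ∧
    ∀ e ∈ bs, ∃ e' ∈ bs', e.1 = e'.1 ∧ R e'.2.1 e.2.1 ∧ R e.2.2 e'.2.2) ∨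
  (∃ T', T = .mu T' ∧ R (unfoldMu T') S) ∨
  (∃ S', S = .mu S' ∧ R T (unfoldMu S'))

/-- Synchronous session subtyping `≤s`: greatest fixpoint of `SubSF`. -/
def SubS (T S : SessionType) : Prop :=
  ∃ R, R T S ∧ ∀ a b, R a b → SubSF R a b

/-- Asynchronous contexts: finite trees of branchings with indexed holes. -/
inductive ACtx : Type where
  | hole : Nat → ACtx
  | branch : List (Nat × SessionType × ACtx) → ACtx

abbrev AEntry := Nat × SessionType × ACtx

mutual
/-- Fill each hole `[]^n` of a context with `f n`. -/
def fillA (f : Nat → SessionType) : ACtx → SessionType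
  | .hole n => f n
  | .branch bs => .branch (fillAList f bs)
def fillAList (f : Nat → SessionType) : List AEntry → List SEntry
  | [] => []
  | (l, s, A) :: rest => (l, s, fillA f A) :: fillAList f rest
end

mutual
/-- The hole indices of an asynchronous context. -/
def holesA : ACtx → List Nat
  | .hole n => [n]
  | .branch bs => holesAList bs
def holesAList : List AEntry → List Nat
  | [] => []
  | (_, _, A) :: rest => holesA A ++ holesAList rest
end

/-- `& ∈ T`: every continuation path of the tree of `T` contains a branching. -/
inductive BranchIn : SessionType → Prop where
  | bra : ∀ bs, BranchIn (.branch bs)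
  | sel : ∀ bs, (∀ e ∈ bs, BranchIn e.2.2) → BranchIn (.select bs)
  | mu : ∀ T, BranchIn T → BranchIn (.mu T)

/-- `& ∉ T`: some continuation path of the tree of `T` contains no branching. -/
inductive BranchNotIn : SessionType → Prop where
  | done : BranchNotIn .done
  | var : ∀ n, BranchNotIn (.var n)
  | sel : ∀ bs e, e ∈ bs → BranchNotIn e.2.2 → BranchNotIn (.select bs)
  | mu : ∀ T, BranchNotIn T → BranchNotIn (.mu T)

/-- `⊕ ∈ T`: every continuation path of the tree of `T` contains a selection. -/
inductive SelIn : SessionType → Prop where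
  | sel : ∀ bs, SelIn (.select bs)
  | bra : ∀ bs, (∀ e ∈ bs, SelIn e.2.2) → SelIn (.branch bs)
  | mu : ∀ T, SelIn T → SelIn (.mu T)

/-- `⊕ ∉ T`: some continuation path of the tree of `T` contains no selection. -/
inductive SelNotIn : SessionType → Prop where
  | done : SelNotIn .done
  | var : ∀ n, SelNotIn (.var n)
  | bra : ∀ bs e, e ∈ bs → SelNotIn e.2.2 → SelNotIn (.branch bs)
  | mu : ∀ T, SelNotIn T → SelNotIn (.mu T)

/-- One step of asynchronous subtyping: the synchronous rules together with
rule sub-perm-async. -/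
def SubAF (R : SessionType → SessionType → Prop) (T S : SessionType) : Prop :=
  SubSF R T S ∨
  (∃ (bs : List SEntry) (A : ACtx) (g : Nat → List SEntry),
    T = .select bs ∧ S = fillA (fun n => .select (g n)) A ∧
    (∃ cbs, A = .branch cbs) ∧
    (∀ e ∈ bs, BranchIn e.2.2 ∧
      ∃ h : Nat → SEntry,
        (∀ n ∈ holesA A, h n ∈ g n ∧ (h n).1 = e.1 ∧ R (h n).2.1 e.2.1) ∧
        R e.2.2 (fillA (fun n => (h n).2.2) A)))

/-- Asynchronous session subtyping `≤a`: greatest fixpoint of `SubAF`. -/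
def SubA (T S : SessionType) : Prop :=
  ∃ R, R T S ∧ ∀ a b, R a b → SubAF R a b

/-- The inductive negation `⋪s` of synchronous subtyping (Table 9),
with μ-unfolding steps for the equi-recursive reading. -/
inductive NSubS : SessionType → SessionType → Prop where
  | endR : ∀ T, T ≠ .done → NSubS .done T
  | endL : ∀ T, T ≠ .done → NSubS T .done
  | brasel : ∀ bs bs', NSubS (.branch bs) (.select bs')
  | selbra : ∀ bs bs', NSubS (.select bs) (.branch bs')
  | labelBra : ∀ bs bs' e', e' ∈ bs' → (∀ e ∈ bs, e.1 ≠ e'.1) →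
      NSubS (.branch bs) (.branch bs')
  | labelSel : ∀ bs bs' e, e ∈ bs → (∀ e' ∈ bs', e.1 ≠ e'.1) →
      NSubS (.select bs) (.select bs')
  | exchBra : ∀ bs bs' e e', e ∈ bs → e' ∈ bs' → e.1 = e'.1 →
      NSubS e.2.1 e'.2.1 → NSubS (.branch bs) (.branch bs')
  | exchSel : ∀ bs bs' e e', e ∈ bs → e' ∈ bs' → e.1 = e'.1 →
      NSubS e'.2.1 e.2.1 → NSubS (.select bs) (.select bs')
  | contBra : ∀ bs bs' e e', e ∈ bs → e' ∈ bs' → e.1 = e'.1 →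
      NSubS e.2.2 e'.2.2 → NSubS (.branch bs) (.branch bs')
  | contSel : ∀ bs bs' e e', e ∈ bs → e' ∈ bs' → e.1 = e'.1 →
      NSubS e.2.2 e'.2.2 → NSubS (.select bs) (.select bs')
  | muL : ∀ T S, NSubS (unfoldMu T) S → NSubS (.mu T) S
  | muR : ∀ T S, NSubS T (unfoldMu S) → NSubS T (.mu S)

/-- The inductive negation `⋪a` of asynchronous subtyping: the synchronous
negation rules except selection-⋪-branching, plus the five asynchronous rules.
The boolean flag records whether the rules n-bra-async and n-sel-async may be used
(`NSubA false` is derivability without those two rules). -/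
inductive NSubA : Bool → SessionType → SessionType → Prop where
  | endR : ∀ b T, T ≠ .done → NSubA b .done T
  | endL : ∀ b T, T ≠ .done → NSubA b T .done
  | brasel : ∀ b bs bs', NSubA b (.branch bs) (.select bs')
  | labelBra : ∀ b bs bs' e', e' ∈ bs' → (∀ e ∈ bs, e.1 ≠ e'.1) →
      NSubA b (.branch bs) (.branch bs')
  | labelSel : ∀ b bs bs' e, e ∈ bs → (∀ e' ∈ bs', e.1 ≠ e'.1) →
      NSubA b (.select bs) (.select bs')
  | exchBra : ∀ b bs bs' e e', e ∈ bs → e' ∈ bs' → e.1 = e'.1 →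
      NSubA b e.2.1 e'.2.1 → NSubA b (.branch bs) (.branch bs')
  | exchSel : ∀ b bs bs' e e', e ∈ bs → e' ∈ bs' → e.1 = e'.1 →
      NSubA b e'.2.1 e.2.1 → NSubA b (.select bs) (.select bs')
  | contBra : ∀ b bs bs' e e', e ∈ bs → e' ∈ bs' → e.1 = e'.1 →
      NSubA b e.2.2 e'.2.2 → NSubA b (.branch bs) (.branch bs')
  | contSel : ∀ b bs bs' e e', e ∈ bs → e' ∈ bs' → e.1 = e'.1 →
      NSubA b e.2.2 e'.2.2 → NSubA b (.select bs) (.select bs')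
  | labelAsync : ∀ b bs (A : ACtx) (g : Nat → List SEntry) e n,
      e ∈ bs → n ∈ holesA A → (∀ e' ∈ g n, e'.1 ≠ e.1) →
      NSubA b (.select bs) (fillA (fun m => .select (g m)) A)
  | exchAsync : ∀ b bs (A : ACtx) (g : Nat → List SEntry) e n e',
      e ∈ bs → n ∈ holesA A → e' ∈ g n → e'.1 = e.1 →
      NSubA b e'.2.1 e.2.1 →
      NSubA b (.select bs) (fillA (fun m => .select (g m)) A)
  | contAsync : ∀ b bs (A : ACtx) (g : Nat → List SEntry)
      (j : SEntry → Nat → SEntry) e₀,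
      (∀ e ∈ bs, ∀ n ∈ holesA A, j e n ∈ g n ∧ (j e n).1 = e.1) →
      e₀ ∈ bs →
      NSubA b e₀.2.2 (fillA (fun n => (j e₀ n).2.2) A) →
      NSubA b (.select bs) (fillA (fun m => .select (g m)) A)
  | braAsync : ∀ T bs, BranchNotIn T → NSubA true T (.branch bs)
  | selAsync : ∀ bs T, SelNotIn T → NSubA true (.select bs) T
  | muL : ∀ b T S, NSubA b (unfoldMu T) S → NSubA b (.mu T) S
  | muR : ∀ b T S, NSubA b T (unfoldMu S) → NSubA b T (.mu S)

/-- Subtyping between asynchronous contexts (Table 12). -/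
inductive CtxSubA : ACtx → ACtx → Prop where
  | hole : ∀ n, CtxSubA (.hole n) (.hole n)
  | bra : ∀ bs bs' (m : AEntry → AEntry),
      (∀ e' ∈ bs', m e' ∈ bs ∧ (m e').1 = e'.1 ∧ SubA (m e').2.1 e'.2.1) →
      (∀ e' ∈ bs', CtxSubA (m e').2.2 e'.2.2) →
      CtxSubA (.branch bs) (.branch bs')

/-- Duals of asynchronous contexts: finite trees of selections with indexed holes. -/
inductive BCtx : Type where
  | hole : Nat → BCtx
  | sel : List (Nat × SessionType × BCtx) → BCtx

abbrev BEntry := Nat × SessionType × BCtx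

mutual
def fillB (f : Nat → SessionType) : BCtx → SessionType
  | .hole n => f n
  | .sel bs => .select (fillBList f bs)
def fillBList (f : Nat → SessionType) : List BEntry → List SEntry
  | [] => []
  | (l, s, B) :: rest => (l, s, fillB f B) :: fillBList f rest
end

mutual
def holesB : BCtx → List Nat
  | .hole n => [n]
  | .sel bs => holesBList bs
def holesBList : List BEntry → List Nat
  | [] => []
  | (_, _, B) :: rest => holesB B ++ holesBList rest
end

/-- Subtyping between duals of asynchronous contexts (rules sub-empty, sub-dual-cont),
with `SubS` on carried types. -/
inductive CtxSubB : BCtx → BCtx → Prop where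
  | hole : ∀ n, CtxSubB (.hole n) (.hole n)
  | sel : ∀ bs bs' (m : BEntry → BEntry),
      (∀ e ∈ bs, m e ∈ bs' ∧ (m e).1 = e.1 ∧ SubS (m e).2.1 e.2.1) →
      (∀ e ∈ bs, CtxSubB e.2.2 (m e).2.2) →
      CtxSubB (.sel bs) (.sel bs')

/-- Coinductively: no continuation path of the tree of `T` contains a branching. -/
def NoBranchPathsF (R : SessionType → Prop) (T : SessionType) : Prop :=
  T = .done ∨ (∃ n, T = .var n) ∨
  (∃ bs, T = .select bs ∧ ∀ e ∈ bs, R e.2.2) ∨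
  (∃ T', T = .mu T' ∧ R (unfoldMu T'))

def NoBranchPaths (T : SessionType) : Prop :=
  ∃ R, R T ∧ ∀ a, R a → NoBranchPathsF R a

/-- Queue types: sequences of messages `!l(S)` (label, carried type); `ε = []`. -/
abbrev QType := List (Nat × SessionType)

/-- The session remainder `rem(T, τ)` as a relation (rules rm-empty, rm-bra, rm-sel). -/
inductive Rem : SessionType → QType → SessionType → Prop where
  | empty : ∀ T, Rem T [] T
  | bra : ∀ bs l S τ T' e, e ∈ bs → e.1 = l → SubA e.2.1 S → Rem e.2.2 τ T' →
      Rem (.branch bs) ((l, S) :: τ) T'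
  | sel : ∀ (bs bs' : List SEntry) τ, bs.length = bs'.length →
      (∀ i (h : i < bs.length) (h' : i < bs'.length),
        (bs.get ⟨i, h⟩).1 = (bs'.get ⟨i, h'⟩).1 ∧
        (bs.get ⟨i, h⟩).2.1 = (bs'.get ⟨i, h'⟩).2.1) →
      (∀ i (h : i < bs.length) (h' : i < bs'.length),
        Rem (bs.get ⟨i, h⟩).2.2 τ (bs'.get ⟨i, h'⟩).2.2) →
      Rem (.select bs) τ (.select bs')

/-- Remainder of an asynchronous context: the queue is consumed within the context. -/
inductive RemCtx : ACtx → QType → ACtx → Prop where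
  | empty : ∀ A, RemCtx A [] A
  | bra : ∀ (bs : List AEntry) l S τ A' e, e ∈ bs → e.1 = l → SubA e.2.1 S →
      RemCtx e.2.2 τ A' → RemCtx (.branch bs) ((l, S) :: τ) A'

/-- Consuming the queue through the context reaches hole `n₀` with residual queue `τ₀`. -/
inductive RemToHole : ACtx → QType → Nat → QType → Prop where
  | hole : ∀ n τ, RemToHole (.hole n) τ n τ
  | bra : ∀ (bs : List AEntry) l S τ n₀ τ₀ e, e ∈ bs → e.1 = l → SubA e.2.1 S →
      RemToHole e.2.2 τ n₀ τ₀ → RemToHole (.branch bs) ((l, S) :: τ) n₀ τ₀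

/-- Session environments: channels (names) to session types, ordered channel
pairs (queue `a→b`) to queue types; both partial. -/
structure SEnv where
  chan : Nat → Option SessionType
  qu : Nat × Nat → Option QType

/-- Balanced session environments. -/
def EnvBalanced (Δ : SEnv) : Prop :=
  (∀ a b T τ, Δ.chan a = some T → Δ.qu (b, a) = some τ → ∃ U, Rem T τ U) ∧
  (∀ a b T T' τ τ', Δ.chan a = some T → Δ.qu (b, a) = some τ →
    Δ.chan b = some T' → Δ.qu (a, b) = some τ' →
    ∃ U U', Rem T τ U ∧ Rem T' τ' U' ∧ U = dual U')

/-- Reduction of session environments (rules tr-in, tr-out; tr-res is implicit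
since reduction only updates the affected channel and queue). -/
inductive EnvRed : SEnv → SEnv → Prop where
  | trIn : ∀ (Δ : SEnv) a b (bs : List SEntry) l S τ e,
      Δ.chan b = some (.branch bs) → Δ.qu (a, b) = some ((l, S) :: τ) →
      e ∈ bs → e.1 = l → SubA e.2.1 S →
      EnvRed Δ ⟨Function.update Δ.chan b (some e.2.2),
                Function.update Δ.qu (a, b) (some τ)⟩
  | trOut : ∀ (Δ : SEnv) a b (A : ACtx) (g : Nat → List SEntry) τ l S
      (choice : Nat → SEntry),
      Δ.chan a = some (fillA (fun n => .select (g n)) A) →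
      Δ.qu (a, b) = some τ →
      (∀ n ∈ holesA A, choice n ∈ g n ∧ (choice n).1 = l ∧ SubA (choice n).2.1 S) →
      EnvRed Δ ⟨Function.update Δ.chan a (some (fillA (fun n => (choice n).2.2) A)),
                Function.update Δ.qu (a, b) (some (τ ++ [(l, S)]))⟩

/-- The remainder of a filled asynchronous context is computed componentwise:
if the queue is consumed within the context, the remainder is the residual
context filled with the same types; if consuming the queue reaches hole `n₀`
with residual queue `τ₀`, the remainder is `rem(T_{n₀}, τ₀)`. -/
theorem rem_fillA : ∀ (A : ACtx) (τ : QType) (f : Nat → SessionType),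
    (∀ A' : ACtx, RemCtx A τ A' → Rem (fillA f A) τ (fillA f A')) ∧
    (∀ (n₀ : Nat) (τ₀ : QType) (U : SessionType),
      RemToHole A τ n₀ τ₀ → Rem (f n₀) τ₀ U → Rem (fillA f A) τ U) := by
  have hmem : ∀ (f : Nat → SessionType) (bs : List AEntry) (e : AEntry), e ∈ bs →
      (e.1, e.2.1, fillA f e.2.2) ∈ fillAList f bs := by
    intro f bs
    induction bs with
    | nil => intro e h; cases h
    | cons hd tl ih =>
      intro e h
      obtain ⟨l, s, A⟩ := hd
      rw [fillAList]
      rcases List.mem_cons.mp h with h | h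
      · subst h; exact List.mem_cons_self
      · exact List.mem_cons_of_mem _ (ih e h)
  have h1 : ∀ (A : ACtx) (τ : QType) (A' : ACtx), RemCtx A τ A' →
      ∀ f, Rem (fillA f A) τ (fillA f A') := by
    intro A τ A' h
    induction h with
    | empty => intro f; exact Rem.empty _
    | bra bs l S τ A' e he hl hsub _ ih =>
      intro f
      rw [fillA]
      exact Rem.bra _ _ _ _ _ (e.1, e.2.1, fillA f e.2.2) (hmem f bs e he) hl hsub (ih f)
  have h2 : ∀ (A : ACtx) (τ : QType) (n₀ : Nat) (τ₀ : QType),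
      RemToHole A τ n₀ τ₀ → ∀ f U, Rem (f n₀) τ₀ U → Rem (fillA f A) τ U := by
    intro A τ n₀ τ₀ h
    induction h with
    | hole n τ => intro f U hU; rw [fillA]; exact hU
    | bra bs l S τ n₀ τ₀ e he hl hsub _ ih =>
      intro f U hU
      rw [fillA]
      exact Rem.bra _ _ _ _ _ (e.1, e.2.1, fillA f e.2.2) (hmem f bs e he) hl hsub (ih f U hU)
  intro A τ f
  exact ⟨fun A' h => h1 A τ A' h f, fun n₀ τ₀ U h hU => h2 A τ n₀ τ₀ h f U hU⟩
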